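/- arXiv:1903.11424 — 2 statements merged into one kernel-verified Lean document; each statement's English description precedes it below -/
import Mathlib

section
/- Let A be a unital complex Banach algebra and δ : A → ℂ a map satisfying δ(x) - δ(y) ∈ 𝕋·σ(x - y) for all x, y ∈ A, where 𝕋 is the unit circle and σ denotes the spectrum. Then for every a ∈ A, the map λ ↦ δ(a + λ·1) - δ(a) is an isometry of ℂ fixing 0; in particular either δ(a + λ·1) - δ(a) = λ(δ(a+1) - δ(a)) for all λ ∈ ℂ, or δ(a + λ·1) - δ(a) = conj(λ)(δ(a+1) - δ(a)) for all λ ∈ ℂ. -/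
/-!
For `x - y = c • 1` the spectrum of `x - y` is `{c}`, so the hypothesis forces
`|δ x - δ y| = |c|`. Hence `λ ↦ δ (a + λ • 1) - δ a` is an isometry of `ℂ` fixing `0`; by
Mazur–Ulam it is real-linear, and a real-linear isometry of `ℂ` is a rotation, possibly composed
with complex conjugation.
-/

theorem Isometry.exists_linearIsometryEquiv_of_map_zero {E : Type*} [NormedAddCommGroup E]
    [NormedSpace ℝ E] [StrictConvexSpace ℝ E] [FiniteDimensional ℝ E] {f : E → E}
    (hf : Isometry f) (h0 : f 0 = 0) : ∃ e : E ≃ₗᵢ[ℝ] E, ⇑e = f := by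
  let g := hf.affineIsometryOfStrictConvexSpace.linearIsometry
  refine ⟨g.toLinearIsometryEquiv rfl, funext fun z => ?_⟩
  simpa [h0] using hf.affineIsometryOfStrictConvexSpace.map_vsub z 0

theorem Complex.eq_mul_or_eq_mul_conj_of_isometry {f : ℂ → ℂ} (hf : Isometry f) (h0 : f 0 = 0) :
    (∀ z, f z = z * f 1) ∨ (∀ z, f z = starRingEnd ℂ z * f 1) := by
  obtain ⟨e, rfl⟩ := hf.exists_linearIsometryEquiv_of_map_zero h0
  obtain ⟨a, rfl | rfl⟩ := linear_isometry_complex e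
  · left; intro z; simp [rotation_apply, mul_comm]
  · right; intro z; simp [rotation_apply, mul_comm]

theorem norm_sub_eq_of_sub_eq_algebraMap {A : Type*} [Ring A] [Algebra ℂ A] (δ : A → ℂ)
    (hsp : ∀ x y : A, ∃ μ s : ℂ, ‖μ‖ = 1 ∧ s ∈ spectrum ℂ (x - y) ∧ δ x - δ y = μ * s)
    {x y : A} {c : ℂ} (hxy : x - y = algebraMap ℂ A c) : ‖δ x - δ y‖ = ‖c‖ := by
  obtain ⟨μ, s, hμ, hs, hδ⟩ := hsp x y
  have : Nontrivial A := (subsingleton_or_nontrivial A).resolve_left fun _ => by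
    simp [spectrum.of_subsingleton] at hs
  rw [hxy, spectrum.scalar_eq, Set.mem_singleton_iff] at hs
  rw [hδ, norm_mul, hμ, one_mul, hs]

theorem translate_map_is_isometry_general
    {A : Type*} [NormedRing A] [NormedAlgebra ℂ A]
    (δ : A → ℂ)
    (hsp : ∀ x y : A, ∃ μ s : ℂ, ‖μ‖ = 1 ∧ s ∈ spectrum ℂ (x - y) ∧
      δ x - δ y = μ * s) :
    ∀ a : A,
      ((∀ l₁ l₂ : ℂ,
          ‖(δ (a + l₁ • (1 : A)) - δ a) - (δ (a + l₂ • (1 : A)) - δ a)‖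
            = ‖l₁ - l₂‖) ∧
        δ (a + (0 : ℂ) • (1 : A)) - δ a = 0) ∧
      ((∀ l : ℂ, δ (a + l • (1 : A)) - δ a = l * (δ (a + 1) - δ a)) ∨
        (∀ l : ℂ, δ (a + l • (1 : A)) - δ a = (starRingEnd ℂ) l * (δ (a + 1) - δ a))) := by
  intro a
  set f : ℂ → ℂ := fun l => δ (a + l • (1 : A)) - δ a
  have hdist (l₁ l₂ : ℂ) : ‖f l₁ - f l₂‖ = ‖l₁ - l₂‖ := by
    rw [sub_sub_sub_cancel_right]
    refine norm_sub_eq_of_sub_eq_algebraMap δ hsp ?_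
    rw [Algebra.algebraMap_eq_smul_one, sub_smul]
    abel
  have h0 : f 0 = 0 := by simp [f]
  have h1 : f 1 = δ (a + 1) - δ a := by simp [f]
  have hf : Isometry f := .of_dist_eq fun l₁ l₂ => by simp only [dist_eq_norm, hdist]
  refine ⟨⟨hdist, h0⟩, ?_⟩
  rw [← h1]
  exact Complex.eq_mul_or_eq_mul_conj_of_isometry hf h0

theorem translate_map_is_isometry
    {A : Type*} [NormedRing A] [NormedAlgebra ℂ A] [CompleteSpace A]
    (δ : A → ℂ)
    (hsp : ∀ x y : A, ∃ μ s : ℂ, ‖μ‖ = 1 ∧ s ∈ spectrum ℂ (x - y) ∧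
      δ x - δ y = μ * s) :
    ∀ a : A,
      ((∀ l₁ l₂ : ℂ,
          ‖(δ (a + l₁ • (1 : A)) - δ a) - (δ (a + l₂ • (1 : A)) - δ a)‖
            = ‖l₁ - l₂‖) ∧
        δ (a + (0 : ℂ) • (1 : A)) - δ a = 0) ∧
      ((∀ l : ℂ, δ (a + l • (1 : A)) - δ a = l * (δ (a + 1) - δ a)) ∨
        (∀ l : ℂ, δ (a + l • (1 : A)) - δ a = (starRingEnd ℂ) l * (δ (a + 1) - δ a))) :=
  translate_map_is_isometry_general δ hsp
end

section
/- Let A be a unital complex Banach algebra and δ : A → ℂ satisfy δ(x) - δ(y) ∈ 𝕋·σ(x - y) for all x, y ∈ A. Define A₁ = {a ∈ A : δ(a + λ·1) - δ(a) = λ(δ(a+1) - δ(a)) for all λ ∈ ℂ} and A₋₁ = {a ∈ A : δ(a + λ·1) - δ(a) = conj(λ)(δ(a+1) - δ(a)) for all λ ∈ ℂ}. Then A₁ and A₋₁ are closed, disjoint, and A = A₁ ∪ A₋₁; hence by connectedness of A, A = A₁ or A = A₋₁. -/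
/-!
For fixed `a`, the map `l ↦ δ (a + l • 1) - δ a` is an isometry of `ℂ` fixing `0`, because
`σ (l • 1 - m • 1) = {l - m}`. An isometry of `ℂ` is real-affine, so this map is a rotation
`l ↦ l * c` or a reflected rotation `l ↦ conj l * c` with `|c| = 1`, but not both (test `l = I`):
hence `A = A₁ ∪ A₋₁` disjointly. Both sets are closed because `δ` is Lipschitz
(`|δ x - δ y| ≤ ‖x - y‖ ‖1‖` by the spectral radius bound), and `A` is connected.
-/

open ComplexConjugate Set

theorem Complex.isometry_eq_mul_or_eq_conj_mul {f : ℂ → ℂ} (hf : Isometry f) (h0 : f 0 = 0) :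
    (∀ z, f z = z * f 1) ∨ (∀ z, f z = conj z * f 1) := by
  let L : ℂ →ₗᵢ[ℝ] ℂ := hf.affineIsometryOfStrictConvexSpace.linearIsometry
  have hL : ∀ z, f z = L z := fun z => by
    simpa [h0] using hf.affineIsometryOfStrictConvexSpace.map_vadd (0 : ℂ) z
  obtain ⟨c, hc | hc⟩ := linear_isometry_complex (L.toLinearIsometryEquiv rfl)
  · refine .inl fun z => ?_
    have hz := congr($hc z)
    have h1 := congr($hc 1)
    simp only [LinearIsometry.coe_toLinearIsometryEquiv, rotation_apply] at hz h1
    rw [hL, hL, hz, h1, mul_one, mul_comm]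
  · refine .inr fun z => ?_
    have hz := congr($hc z)
    have h1 := congr($hc 1)
    simp only [LinearIsometry.coe_toLinearIsometryEquiv, LinearIsometryEquiv.trans_apply,
      rotation_apply, Complex.conjLIE_apply, map_one] at hz h1
    rw [hL, hL, hz, h1, mul_one, mul_comm]

theorem Complex.not_eq_mul_and_eq_conj_mul {f : ℂ → ℂ} (hf : Isometry f) (h0 : f 0 = 0) :
    ¬((∀ z, f z = z * f 1) ∧ (∀ z, f z = conj z * f 1)) := by
  rintro ⟨hlin, hconj⟩
  have hf1 : f 1 ≠ 0 := by
    rw [← norm_ne_zero_iff, ← sub_zero (f 1), ← h0, ← dist_eq_norm, hf.dist_eq]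
    norm_num
  have hI : Complex.I * f 1 = conj Complex.I * f 1 := (hlin _).symm.trans (hconj _)
  rw [mul_left_inj' hf1, Complex.conj_I, eq_neg_iff_add_eq_zero, ← two_mul] at hI
  simp at hI

theorem eq_univ_or_eq_univ_of_disjoint_of_isClosed {X : Type*} [TopologicalSpace X]
    [PreconnectedSpace X] {s t : Set X} (hd : Disjoint s t) (hu : s ∪ t = univ)
    (hs : IsClosed s) (ht : IsClosed t) : s = univ ∨ t = univ := by
  have hcompl : sᶜ = t := (IsCompl.of_eq hd.eq_bot hu).compl_eq
  rcases isClopen_iff.mp ⟨hs, by rw [← isClosed_compl_iff, hcompl]; exact ht⟩ with h | h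
  · rw [h, empty_union] at hu
    exact .inr hu
  · exact .inl h

theorem isClosed_setOf_forall_sub_eq_mul {A : Type*} [AddMonoidWithOne A] [SMul ℂ A]
    [TopologicalSpace A] [ContinuousAdd A] {δ : A → ℂ} (hδ : Continuous δ) (φ : ℂ → ℂ) :
    IsClosed {a | ∀ l : ℂ, δ (a + l • (1 : A)) - δ a = φ l * (δ (a + 1) - δ a)} := by
  rw [ofPred_forall]
  exact isClosed_iInter fun l => isClosed_eq (by fun_prop) (by fun_prop)

/-- `δ x - δ y ∈ 𝕋 • σ (x - y)` for all `x, y`. -/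
def SubMemCircleSmulSpectrum {A : Type*} [Ring A] [Algebra ℂ A] (δ : A → ℂ) : Prop :=
  ∀ x y : A, ∃ μ s : ℂ, ‖μ‖ = 1 ∧ s ∈ spectrum ℂ (x - y) ∧ δ x - δ y = μ * s

namespace SubMemCircleSmulSpectrum

variable {A : Type*} [NormedRing A] [NormedAlgebra ℂ A] {δ : A → ℂ}

theorem nontrivial (hδ : SubMemCircleSmulSpectrum δ) : Nontrivial A := by
  obtain ⟨-, s, -, hs, -⟩ := hδ 0 0
  by_contra hA
  rw [not_nontrivial_iff_subsingleton] at hA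
  simp [spectrum.of_subsingleton] at hs

theorem dist_le_mul [CompleteSpace A] (hδ : SubMemCircleSmulSpectrum δ) (x y : A) :
    dist (δ x) (δ y) ≤ ‖(1 : A)‖ * dist x y := by
  obtain ⟨μ, s, hμ, hs, hxy⟩ := hδ x y
  rw [dist_eq_norm, dist_eq_norm, hxy, norm_mul, hμ, one_mul, mul_comm]
  exact spectrum.norm_le_norm_mul_of_mem hs

theorem continuous [CompleteSpace A] (hδ : SubMemCircleSmulSpectrum δ) : Continuous δ :=
  (LipschitzWith.of_dist_le_mul (K := ‖(1 : A)‖₊) hδ.dist_le_mul).continuous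

theorem isometry_add_smul_one (hδ : SubMemCircleSmulSpectrum δ) (a : A) :
    Isometry fun l : ℂ => δ (a + l • (1 : A)) - δ a := by
  have := hδ.nontrivial
  refine Isometry.of_dist_eq fun l m => ?_
  obtain ⟨μ, s, hμ, hs, hlm⟩ := hδ (a + l • 1) (a + m • 1)
  rw [add_sub_add_left_eq_sub, ← sub_smul, ← Algebra.algebraMap_eq_smul_one,
    spectrum.scalar_eq, mem_singleton_iff] at hs
  rw [dist_eq_norm, dist_eq_norm, sub_sub_sub_cancel_right, hlm, norm_mul, hμ, one_mul, hs]

end SubMemCircleSmulSpectrum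

theorem A1_Aneg1_clopen_partition
    {A : Type*} [NormedRing A] [NormedAlgebra ℂ A] [CompleteSpace A]
    (δ : A → ℂ)
    (hsp : ∀ x y : A, ∃ μ s : ℂ, ‖μ‖ = 1 ∧ s ∈ spectrum ℂ (x - y) ∧
      δ x - δ y = μ * s) :
    let A₁ : Set A := {a | ∀ l : ℂ, δ (a + l • (1 : A)) - δ a = l * (δ (a + 1) - δ a)}
    let Aneg : Set A := {a | ∀ l : ℂ,
      δ (a + l • (1 : A)) - δ a = (starRingEnd ℂ) l * (δ (a + 1) - δ a)}
    IsClosed A₁ ∧ IsClosed Aneg ∧ Disjoint A₁ Aneg ∧ A₁ ∪ Aneg = Set.univ ∧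
      (A₁ = Set.univ ∨ Aneg = Set.univ) := by
  intro A₁ Aneg
  have hδ : SubMemCircleSmulSpectrum δ := hsp
  have hclosed₁ : IsClosed A₁ := isClosed_setOf_forall_sub_eq_mul hδ.continuous fun l => l
  have hclosedneg : IsClosed Aneg := isClosed_setOf_forall_sub_eq_mul hδ.continuous conj
  have hiso (a : A) := hδ.isometry_add_smul_one a
  have hzero (a : A) : δ (a + (0 : ℂ) • (1 : A)) - δ a = 0 := by simp
  have hone (a : A) : a + (1 : ℂ) • (1 : A) = a + 1 := by rw [one_smul]
  have hdisj : Disjoint A₁ Aneg := disjoint_left.mpr fun a h₁ hneg =>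
    Complex.not_eq_mul_and_eq_conj_mul (hiso a) (hzero a) (by simpa only [hone] using ⟨h₁, hneg⟩)
  have hunion : A₁ ∪ Aneg = univ := eq_univ_of_forall fun a => by
    simpa only [hone, mem_union, A₁, Aneg, mem_ofPred_eq] using Complex.isometry_eq_mul_or_eq_conj_mul (hiso a) (hzero a)
  exact ⟨hclosed₁, hclosedneg, hdisj, hunion,
    eq_univ_or_eq_univ_of_disjoint_of_isClosed hdisj hunion hclosed₁ hclosedneg⟩
end
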